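/- Fix d ≥ 1 and D = {0,…,d}. Let A ∈ ℝ^{m×n} with n ≤ 2. If A has no forbidden pattern, then A is universally connected: for every b ∈ ℝ^m the solution graph on {x ∈ D^n : Ax ≥ b} (edges at Hamming distance 1) is connected. -/

import Mathlib

open Matrix Finset
open scoped Classical

/-- `A` has a forbidden pattern: there are `lam ≥ 1` rows and columns, with
orderings (injective enumerations) `r`, `c`, such that in column `c l` all rows
of the pattern other than `r l`, `r (l+1)` vanish (cyclically), and
`A (r l) (c l) * A (r (l+1)) (c l) < 0` for every `l`. -/
def HasFP {m n : ℕ} (A : Matrix (Fin m) (Fin n) ℝ) : Prop :=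
  ∃ lam : ℕ, ∃ r : Fin (lam + 1) → Fin m, ∃ c : Fin (lam + 1) → Fin n,
    Function.Injective r ∧ Function.Injective c ∧
    (∀ l k : Fin (lam + 1), k ≠ l → k ≠ l + 1 → A (r k) (c l) = 0) ∧
    (∀ l : Fin (lam + 1), A (r l) (c l) * A (r (l + 1)) (c l) < 0)

/-- `A`, restricted to the set `S` of remaining columns, can be eliminated at column `j`. -/
def CanElim {m n : ℕ} (A : Matrix (Fin m) (Fin n) ℝ) (S : Finset (Fin n)) (j : Fin n) : Prop :=
  (∀ i, 0 < A i j → ∀ j' ∈ S, j' ≠ j → A i j' = 0) ∨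
  (∀ i, A i j < 0 → ∀ j' ∈ S, j' ≠ j → A i j' = 0)

/-- `A` has an elimination ordering. -/
def HasEO {m n : ℕ} (A : Matrix (Fin m) (Fin n) ℝ) : Prop :=
  ∃ e : Fin n ≃ Fin n, ∀ t : Fin n,
    CanElim A (Finset.univ.filter fun c => ∀ s : Fin n, s < t → e s ≠ c) (e t)

/-- `x ∈ {0,…,d}ⁿ` is a feasible solution of the integer linear system `A x ≥ b`. -/
def Feas {m n : ℕ} (d : ℕ) (A : Matrix (Fin m) (Fin n) ℝ) (b : Fin m → ℝ)
    (x : Fin n → ℕ) : Prop :=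
  (∀ j, x j ≤ d) ∧ ∀ i, b i ≤ ∑ j, A i j * (x j : ℝ)

/-- Adjacency in the solution graph `G(A,b)`: both endpoints are feasible and
their Hamming distance is `1`. -/
def SGAdj {m n : ℕ} (d : ℕ) (A : Matrix (Fin m) (Fin n) ℝ) (b : Fin m → ℝ)
    (x y : Fin n → ℕ) : Prop :=
  Feas d A b x ∧ Feas d A b y ∧ hammingDist x y = 1

/-- The solution graph `G(A,b)` is connected. -/
def SGConn {m n : ℕ} (d : ℕ) (A : Matrix (Fin m) (Fin n) ℝ) (b : Fin m → ℝ) : Prop :=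
  ∀ x y : Fin n → ℕ, Feas d A b x → Feas d A b y →
    Relation.ReflTransGen (SGAdj d A b) x y

/-- `A` is universally connected. -/
def UnivConn {m n : ℕ} (d : ℕ) (A : Matrix (Fin m) (Fin n) ℝ) : Prop :=
  ∀ b : Fin m → ℝ, SGConn d A b

/-!
With at most two variables, a matrix without a forbidden pattern has a column `j` in which all
positive (or all negative) entries lie in rows vanishing outside column `j`. Those rows only bound
`x j` from below (resp. above), so two feasible points can both slide their `j`-th coordinate to the
smaller (resp. larger) of their two values. The two resulting points differ in one coordinate, and
feasibility along a coordinate line is an interval, which gives a path.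
-/

open Function Relation

lemma hammingDist_eq_one_of_eq_of_ne {n : ℕ} {x y : Fin n → ℕ} {j : Fin n}
    (hj : x j ≠ y j) (h : ∀ k ≠ j, x k = y k) : hammingDist x y = 1 := by
  rw [hammingDist, card_eq_one]
  refine ⟨j, eq_singleton_iff_unique_mem.2 ⟨by simpa using hj, fun k hk => ?_⟩⟩
  by_contra hkj
  exact (mem_filter.1 hk).2 (h k hkj)

lemma sum_mul_eq_add_sum_erase {m n : ℕ} (A : Matrix (Fin m) (Fin n) ℝ) (x : Fin n → ℕ)
    (i : Fin m) (j : Fin n) :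
    ∑ k, A i k * (x k : ℝ) = A i j * (x j : ℝ) + ∑ k ∈ univ.erase j, A i k * (x k : ℝ) :=
  (add_sum_erase _ _ (mem_univ j)).symm

section SolutionGraph

variable {m n d : ℕ} {A : Matrix (Fin m) (Fin n) ℝ} {b : Fin m → ℝ}

instance : Std.Symm (SGAdj d A b) :=
  ⟨fun _ _ ⟨hx, hy, hxy⟩ => ⟨hy, hx, by rwa [hammingDist_comm]⟩⟩

lemma sum_erase_eq_of_eq_of_ne {x y : Fin n → ℕ} {j : Fin n} (h : ∀ k ≠ j, x k = y k)
    (i : Fin m) :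
    ∑ k ∈ univ.erase j, A i k * (x k : ℝ) = ∑ k ∈ univ.erase j, A i k * (y k : ℝ) :=
  sum_congr rfl fun k hk => by rw [h k (ne_of_mem_erase hk)]

-- Each constraint is affine in the `j`-th coordinate along the line through `x`, `z`, `y`.
lemma Feas.of_between {x y z : Fin n → ℕ} {j : Fin n} (hx : Feas d A b x) (hy : Feas d A b y)
    (hxz : ∀ k ≠ j, x k = z k) (hyz : ∀ k ≠ j, y k = z k) (hxj : x j ≤ z j) (hzj : z j ≤ y j) :
    Feas d A b z := by
  refine ⟨fun k => ?_, fun i => ?_⟩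
  · rcases eq_or_ne k j with rfl | hk
    · exact hzj.trans (hy.1 k)
    · exact hxz k hk ▸ hx.1 k
  have hxi := hx.2 i
  have hyi := hy.2 i
  rw [sum_mul_eq_add_sum_erase A _ i j] at hxi hyi ⊢
  rw [sum_erase_eq_of_eq_of_ne hxz] at hxi
  rw [sum_erase_eq_of_eq_of_ne hyz] at hyi
  rcases le_total 0 (A i j) with hA | hA
  · nlinarith [(Nat.cast_le (α := ℝ)).2 hxj]
  · nlinarith [(Nat.cast_le (α := ℝ)).2 hzj]

lemma reflTransGen_sgAdj_of_eq_of_ne {x y : Fin n → ℕ} (j : Fin n) (hx : Feas d A b x)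
    (hy : Feas d A b y) (hxy : ∀ k ≠ j, x k = y k) : ReflTransGen (SGAdj d A b) x y := by
  wlog hle : x j ≤ y j generalizing x y
  · exact symm (this hy hx (fun k hk => (hxy k hk).symm) (le_of_not_ge hle))
  obtain ⟨t, ht⟩ := Nat.exists_eq_add_of_le hle
  induction t generalizing x with
  | zero =>
    have : x = y := funext fun k => by
      rcases eq_or_ne k j with rfl | hk
      · exact ht.symm
      · exact hxy k hk
    exact this ▸ .refl
  | succ t ih =>
    set x' := update x j (x j + 1)
    have hxx' : ∀ k ≠ j, x k = x' k := fun k hk => (update_of_ne hk _ _).symm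
    have hx'y : ∀ k ≠ j, x' k = y k := fun k hk => (hxx' k hk).symm.trans (hxy k hk)
    have hx' : Feas d A b x' :=
      hx.of_between hy hxx' (fun k hk => (hx'y k hk).symm) (by simp [x']) (by simp [x']; omega)
    have hstep : SGAdj d A b x x' :=
      ⟨hx, hx', hammingDist_eq_one_of_eq_of_ne (j := j) (by simp [x']) hxx'⟩
    exact .head hstep (ih hx' hx'y (by simp [x']; omega) (by simp [x']; omega))

lemma Feas.update_of_forall_row {z w : Fin n → ℕ} {j : Fin n} (hz : Feas d A b z)
    (hw : Feas d A b w)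
    (h : ∀ i, A i j * (z j : ℝ) ≤ A i j * (w j : ℝ) ∨ ∀ k ≠ j, A i k = 0) :
    Feas d A b (update z j (w j)) := by
  refine ⟨fun k => ?_, fun i => ?_⟩
  · rcases eq_or_ne k j with rfl | hk
    · simpa using hw.1 k
    · simpa [hk] using hz.1 k
  rw [sum_mul_eq_add_sum_erase A _ i j, update_self,
    sum_erase_eq_of_eq_of_ne (y := z) (fun k hk => update_of_ne hk _ _)]
  rcases h i with hgain | hzero
  · linarith [hz.2 i, sum_mul_eq_add_sum_erase A z i j]
  · have hrest : ∀ x : Fin n → ℕ, ∑ k ∈ univ.erase j, A i k * (x k : ℝ) = 0 := fun x =>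
      sum_eq_zero fun k hk => by rw [hzero k (ne_of_mem_erase hk), zero_mul]
    linarith [hw.2 i, sum_mul_eq_add_sum_erase A w i j, hrest w, hrest z]

lemma Feas.update_of_le {z w : Fin n → ℕ} {j : Fin n}
    (hpos : ∀ i, 0 < A i j → ∀ k ∈ univ, k ≠ j → A i k = 0)
    (hz : Feas d A b z) (hw : Feas d A b w) (hwz : w j ≤ z j) :
    Feas d A b (update z j (w j)) :=
  hz.update_of_forall_row hw fun i => (le_or_gt (A i j) 0).imp
    (mul_le_mul_of_nonpos_left (by exact_mod_cast hwz)) fun hA k => hpos i hA k (mem_univ k)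

lemma Feas.update_of_ge {z w : Fin n → ℕ} {j : Fin n}
    (hneg : ∀ i, A i j < 0 → ∀ k ∈ univ, k ≠ j → A i k = 0)
    (hz : Feas d A b z) (hw : Feas d A b w) (hzw : z j ≤ w j) :
    Feas d A b (update z j (w j)) :=
  hz.update_of_forall_row hw fun i => (le_or_gt 0 (A i j)).imp
    (mul_le_mul_of_nonneg_left (by exact_mod_cast hzw)) fun hA k => hneg i hA k (mem_univ k)

lemma CanElim.exists_feas_update {j : Fin n} (hA : CanElim A univ j) {x y : Fin n → ℕ}
    (hx : Feas d A b x) (hy : Feas d A b y) :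
    ∃ L, Feas d A b (update x j L) ∧ Feas d A b (update y j L) := by
  rcases hA with hpos | hneg <;> rcases le_total (x j) (y j) with hxy | hyx
  · exact ⟨x j, by simpa using hx, hy.update_of_le hpos hx hxy⟩
  · exact ⟨y j, hx.update_of_le hpos hy hyx, by simpa using hy⟩
  · exact ⟨y j, hx.update_of_ge hneg hy hxy, by simpa using hy⟩
  · exact ⟨x j, by simpa using hx, hy.update_of_ge hneg hx hyx⟩

end SolutionGraph

lemma sgConn_of_canElim {m d : ℕ} {A : Matrix (Fin m) (Fin 2) ℝ} {j : Fin 2}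
    (hA : CanElim A univ j) (b : Fin m → ℝ) : SGConn d A b := by
  intro x y hx hy
  obtain ⟨L, hxL, hyL⟩ := hA.exists_feas_update hx hy
  have hupdate : ∀ z : Fin 2 → ℕ, ∀ k ≠ j, z k = update z j L k :=
    fun z k hk => (update_of_ne hk _ _).symm
  have hother : ∀ k ≠ j + 1, update x j L k = update y j L k := by
    intro k hk
    obtain rfl : k = j := by omega
    simp
  exact ((reflTransGen_sgAdj_of_eq_of_ne j hx hxL (hupdate x)).trans
    (reflTransGen_sgAdj_of_eq_of_ne (j + 1) hxL hyL hother)).trans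
    (symm (reflTransGen_sgAdj_of_eq_of_ne j hy hyL (hupdate y)))

lemma hasFP_of_opposite_rows {m : ℕ} {A : Matrix (Fin m) (Fin 2) ℝ} {i₁ i₂ : Fin m}
    (h₀ : A i₁ 0 * A i₂ 0 < 0) (h₁ : A i₁ 1 * A i₂ 1 < 0) : HasFP A := by
  have hi : i₁ ≠ i₂ := by
    rintro rfl
    exact (mul_self_nonneg _).not_gt h₀
  refine ⟨1, ![i₁, i₂], ![0, 1], ?_, ?_, fun l k => ?_, fun l => ?_⟩
  · intro a c hac
    fin_cases a <;> fin_cases c <;> simp_all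
  · intro a c hac
    fin_cases a <;> fin_cases c <;> simp_all
  · fin_cases l <;> fin_cases k <;> simp
  · fin_cases l
    · simpa using h₀
    · simpa [mul_comm] using h₁

lemma exists_canElim_of_not_hasFP {m : ℕ} {A : Matrix (Fin m) (Fin 2) ℝ} (hA : ¬HasFP A) :
    ∃ j, CanElim A univ j := by
  by_contra! hc
  obtain ⟨⟨p₀, hp₀, hp₀'⟩, n₀, hn₀, hn₀'⟩ :
      (∃ i, 0 < A i 0 ∧ A i 1 ≠ 0) ∧ ∃ i, A i 0 < 0 ∧ A i 1 ≠ 0 := by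
    simpa [CanElim, Fin.forall_fin_two] using hc 0
  obtain ⟨⟨p₁, hp₁, hp₁'⟩, n₁, hn₁, hn₁'⟩ :
      (∃ i, 0 < A i 1 ∧ A i 0 ≠ 0) ∧ ∃ i, A i 1 < 0 ∧ A i 0 ≠ 0 := by
    simpa [CanElim, Fin.forall_fin_two] using hc 1
  -- If `p₀, n₀` are not opposite, their entries in column `1` share a sign, and then `p₁` or `n₁`
  -- is opposite to one of them.
  refine hA ?_
  rcases hp₀'.lt_or_gt with hp₀' | hp₀' <;> rcases hn₀'.lt_or_gt with hn₀' | hn₀'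
  · rcases hp₁'.lt_or_gt with hp₁' | hp₁'
    · exact hasFP_of_opposite_rows (i₁ := p₀) (i₂ := p₁) (by nlinarith) (by nlinarith)
    · exact hasFP_of_opposite_rows (i₁ := n₀) (i₂ := p₁) (by nlinarith) (by nlinarith)
  · exact hasFP_of_opposite_rows (i₁ := p₀) (i₂ := n₀) (by nlinarith) (by nlinarith)
  · exact hasFP_of_opposite_rows (i₁ := p₀) (i₂ := n₀) (by nlinarith) (by nlinarith)
  · rcases hn₁'.lt_or_gt with hn₁' | hn₁'
    · exact hasFP_of_opposite_rows (i₁ := p₀) (i₂ := n₁) (by nlinarith) (by nlinarith)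
    · exact hasFP_of_opposite_rows (i₁ := n₀) (i₂ := n₁) (by nlinarith) (by nlinarith)

theorem stmt13_general {m n : ℕ} (d : ℕ) (hn : n ≤ 2)
    (A : Matrix (Fin m) (Fin n) ℝ) (h : ¬ HasFP A) : UnivConn d A := by
  intro b x y hx hy
  interval_cases n
  · exact Subsingleton.elim x y ▸ .refl
  · exact reflTransGen_sgAdj_of_eq_of_ne 0 hx hy fun k hk => absurd (Subsingleton.elim k 0) hk
  · obtain ⟨j, hj⟩ := exists_canElim_of_not_hasFP h
    exact sgConn_of_canElim hj b x y hx hy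

theorem stmt13 {m n : ℕ} (d : ℕ) (hd : 1 ≤ d) (hn : n ≤ 2)
    (A : Matrix (Fin m) (Fin n) ℝ) (h : ¬ HasFP A) : UnivConn d A :=
  stmt13_general d hn A h
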